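/- In a system (S, (L_x), (Ω_{x,y})) satisfying the minimal axioms, for any x, y ∈ S, im Φ_{x,x∨y} ∩ im Φ_{y,x∨y} = im Φ_{x∧y,x∨y}. -/

import Mathlib

/-- A partial bijection from `A` to `B`, modeled as a functional and injective
relation `R : A → B → Prop`.  Its domain is `rdom R` and its image is `rim R`. -/
def IsPartialBij {A : Type u} {B : Type v} (R : A → B → Prop) : Prop :=
  (∀ a b b', R a b → R a b' → b = b') ∧ (∀ a a' b, R a b → R a' b → a = a')

/-- The domain of a partial bijection (as a relation). -/
def rdom {A : Type u} {B : Type v} (R : A → B → Prop) : Set A := {a | ∃ b, R a b}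

/-- The image of a partial bijection (as a relation). -/
def rim {A : Type u} {B : Type v} (R : A → B → Prop) : Set B := {b | ∃ a, R a b}

/-- A (nonempty) filter of a lattice: an up-set closed under meets. -/
def IsLatFilter {A : Type u} [Lattice A] (F : Set A) : Prop :=
  F.Nonempty ∧ (∀ a ∈ F, ∀ b, a ≤ b → b ∈ F) ∧ (∀ a ∈ F, ∀ b ∈ F, a ⊓ b ∈ F)

/-- A (nonempty) ideal of a lattice: a down-set closed under joins. -/
def IsLatIdeal {A : Type u} [Lattice A] (I : Set A) : Prop :=
  I.Nonempty ∧ (∀ a ∈ I, ∀ b, b ≤ a → b ∈ I) ∧ (∀ a ∈ I, ∀ b ∈ I, a ⊔ b ∈ I)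

/-- A relation between lattices preserves joins and meets; together with
`IsPartialBij` this says the relation is a lattice isomorphism from its
domain onto its image. -/
def IsLatHomRel {A : Type u} {B : Type v} [Lattice A] [Lattice B]
    (R : A → B → Prop) : Prop :=
  (∀ a a' b b', R a b → R a' b' → R (a ⊔ a') (b ⊔ b')) ∧
  (∀ a a' b b', R a b → R a' b' → R (a ⊓ a') (b ⊓ b'))

/-- `ChainComp L Ω a b f` says there is a saturated chain
`a = x₀ ⋖ x₁ ⋖ ⋯ ⋖ xₙ = b` in `S` such that `f` is the composite
`Ω_{x_{n-1},x_n} ∘ ⋯ ∘ Ω_{x_0,x_1}` (the identity relation when `a = b`). -/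
inductive ChainComp {S : Type u} [Lattice S] (L : S → Type v)
    (Ω : ∀ x y : S, x ⋖ y → L x → L y → Prop) : ∀ a b : S, (L a → L b → Prop) → Prop
  | refl (a : S) : ChainComp L Ω a a (fun u v => u = v)
  | cons {a b c : S} (h : a ⋖ b) {f : L b → L c → Prop}
      (hf : ChainComp L Ω b c f) : ChainComp L Ω a c (Relation.Comp (Ω a b h) f)

/-- The minimal axioms for a polytone system `(S, (L x), Ω)`:
(PS1⁻) `S` is l.f.f.c.; (PS2⁻) the blocks are finite, modular, complemented;
(PS3⁻) each connection `Ω x y h` (for a cover `x ⋖ y`) is a partial bijection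
whose domain is a filter, whose image is an ideal, and which is a lattice
isomorphism; (PS6⁻∧), (PS7⁻∧), (PS8⁻∨) as in the paper. -/
def MinimalAxioms {S : Type u} [Lattice S] (L : S → Type v)
    [∀ x, Lattice (L x)] [∀ x, BoundedOrder (L x)]
    (Ω : ∀ x y : S, x ⋖ y → L x → L y → Prop) : Prop :=
  -- (PS1⁻) S is l.f.f.c.
  (∀ a b : S, (Set.Icc a b).Finite) ∧
  (∀ a : S, {b | a ⋖ b}.Finite) ∧
  (∀ a : S, {b | b ⋖ a}.Finite) ∧
  -- (PS2⁻) blocks are f.m.c.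
  (∀ x, Finite (L x)) ∧
  (∀ x, IsModularLattice (L x)) ∧
  (∀ x, ComplementedLattice (L x)) ∧
  -- (PS3⁻)
  (∀ x y : S, ∀ h : x ⋖ y, IsPartialBij (Ω x y h) ∧ IsLatFilter (rdom (Ω x y h)) ∧
    IsLatIdeal (rim (Ω x y h)) ∧ IsLatHomRel (Ω x y h)) ∧
  -- (PS6⁻∧)
  (∀ x y : S, ∀ (hx : x ⊓ y ⋖ x) (hy : x ⊓ y ⋖ y),
    ∃ (f : L x → L (x ⊔ y) → Prop) (g : L y → L (x ⊔ y) → Prop),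
      ChainComp L Ω x (x ⊔ y) f ∧ ChainComp L Ω y (x ⊔ y) g ∧
      Relation.Comp (Ω (x ⊓ y) x hx) f = Relation.Comp (Ω (x ⊓ y) y hy) g) ∧
  -- (PS7⁻∧)
  (∀ x y : S, ∀ (hx : x ⊓ y ⋖ x) (hy : x ⊓ y ⋖ y),
    ∃ h : L (x ⊓ y) → L (x ⊔ y) → Prop, ChainComp L Ω (x ⊓ y) (x ⊔ y) h ∧
      rdom (Ω (x ⊓ y) x hx) ∩ rdom (Ω (x ⊓ y) y hy) ⊆ rdom h) ∧
  -- (PS8⁻∨)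
  (∀ x y : S, ∀ (hx : x ⋖ x ⊔ y) (hy : y ⋖ x ⊔ y),
    ∃ h : L (x ⊓ y) → L (x ⊔ y) → Prop, ChainComp L Ω (x ⊓ y) (x ⊔ y) h ∧
      rim (Ω x (x ⊔ y) hx) ∩ rim (Ω y (x ⊔ y) hy) ⊆ rim h)

set_option linter.unusedSectionVars false
section AuxLemmas

universe u v

theorem comp_eq_right {A : Type u} {B : Type v} (R : A → B → Prop) :
    Relation.Comp R (fun u v => u = v) = R := by
  funext a b; apply propext
  constructor
  · rintro ⟨c, hc, rfl⟩; exact hc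
  · intro h; exact ⟨b, h, rfl⟩

theorem comp_eq_left {A : Type u} {B : Type v} (R : A → B → Prop) :
    Relation.Comp (fun u v : A => u = v) R = R := by
  funext a b; apply propext
  constructor
  · rintro ⟨c, rfl, hc⟩; exact hc
  · intro h; exact ⟨a, rfl, h⟩

theorem rim_comp_subset {A B C : Type*} (R : A → B → Prop) (P : B → C → Prop) :
    rim (Relation.Comp R P) ⊆ rim P := by
  rintro c ⟨a, b, hab, hbc⟩; exact ⟨b, hbc⟩

theorem isPartialBij_comp {A B C : Type*} {R : A → B → Prop} {P : B → C → Prop}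
    (hR : IsPartialBij R) (hP : IsPartialBij P) : IsPartialBij (Relation.Comp R P) := by
  constructor
  · rintro a c c' ⟨b, hab, hbc⟩ ⟨b', hab', hbc'⟩
    obtain rfl : b = b' := hR.1 a b b' hab hab'
    exact hP.1 b c c' hbc hbc'
  · rintro a a' c ⟨b, hab, hbc⟩ ⟨b', hab', hbc'⟩
    obtain rfl : b = b' := hP.2 b b' c hbc hbc'
    exact hR.2 a a' b hab hab'

variable {S : Type u} [Lattice S] {L : S → Type v}
  [∀ x, Lattice (L x)] [∀ x, BoundedOrder (L x)]
  {Ω : ∀ x y : S, x ⋖ y → L x → L y → Prop}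

theorem ChainComp.le {a b : S} {f : L a → L b → Prop}
    (h : ChainComp L Ω a b f) : a ≤ b := by
  induction h with
  | refl a => exact le_rfl
  | cons h hf ih => exact h.le.trans ih

theorem ChainComp.comp {a b c : S} {f : L a → L b → Prop} {g : L b → L c → Prop}
    (hf : ChainComp L Ω a b f) (hg : ChainComp L Ω b c g) :
    ChainComp L Ω a c (Relation.Comp f g) := by
  induction hf with
  | refl a => rw [comp_eq_left]; exact hg
  | cons h hf ih => rw [Relation.comp_assoc]; exact ChainComp.cons h (ih hg)

theorem ChainComp.heq_of_le {a b : S} {f : L a → L b → Prop}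
    (h : ChainComp L Ω a b f) (hba : b ≤ a) :
    HEq f (fun u v : L a => u = v) := by
  cases h with
  | refl a => rfl
  | cons h hf => exact absurd (hf.le.trans hba) h.lt.not_ge

theorem ChainComp.eq_of_self {a : S} {f : L a → L a → Prop}
    (h : ChainComp L Ω a a f) : f = fun u v : L a => u = v :=
  eq_of_heq (h.heq_of_le le_rfl)

/-- In a lattice with finite intervals, above any `a < b` there is a cover of `a` below `b`. -/
theorem exists_cover_above (hfin : ∀ a b : S, (Set.Icc a b).Finite)
    {a b : S} (hab : a < b) : ∃ c, a ⋖ c ∧ c ≤ b := by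
  have hs : ({c | a < c ∧ c ≤ b} : Set S).Finite :=
    (hfin a b).subset (fun c hc => ⟨hc.1.le, hc.2⟩)
  obtain ⟨m, hm, hmin⟩ := Set.Finite.exists_minimalFor id _ hs ⟨b, hab, le_rfl⟩
  refine ⟨m, ⟨hm.1, fun u hu hum => ?_⟩, hm.2⟩
  exact absurd (hmin ⟨hu, hum.le.trans hm.2⟩ hum.le) hum.not_ge

theorem exists_cover_below (hfin : ∀ a b : S, (Set.Icc a b).Finite)
    {a b : S} (hab : a < b) : ∃ c, a ≤ c ∧ c ⋖ b := by
  have hs : ({c | a ≤ c ∧ c < b} : Set S).Finite :=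
    (hfin a b).subset (fun c hc => ⟨hc.1, hc.2.le⟩)
  obtain ⟨m, hm, hmax⟩ := Set.Finite.exists_maximalFor id _ hs ⟨a, le_rfl, hab⟩
  refine ⟨m, hm.1, ⟨hm.2, fun u hmu hub => ?_⟩⟩
  exact absurd (hmax ⟨hm.1.trans hmu.le, hub⟩ hmu.le) hmu.not_ge

theorem chain_exists (hfin : ∀ a b : S, (Set.Icc a b).Finite) :
    ∀ (n : ℕ) (a b : S), a ≤ b → (Set.Icc a b).ncard ≤ n →
      ∃ f, ChainComp L Ω a b f := by
  intro n
  induction n with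
  | zero =>
    intro a b hab hc
    have h0 : 0 < (Set.Icc a b).ncard := (Set.ncard_pos (hfin a b)).2 ⟨a, le_rfl, hab⟩
    omega
  | succ n ih =>
    intro a b hab hc
    rcases eq_or_lt_of_le hab with rfl | hlt
    · exact ⟨_, ChainComp.refl a⟩
    · obtain ⟨c, hac, hcb⟩ := exists_cover_above hfin hlt
      have hss : Set.Icc c b ⊂ Set.Icc a b := by
        constructor
        · exact Set.Icc_subset_Icc_left hac.le
        · intro hsub
          exact absurd (hsub ⟨le_rfl, hab⟩).1 hac.lt.not_ge
      have hlt' : (Set.Icc c b).ncard < (Set.Icc a b).ncard :=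
        Set.ncard_lt_ncard hss (hfin a b)
      obtain ⟨f, hf⟩ := ih c b hcb (by omega)
      exact ⟨_, ChainComp.cons hac hf⟩

end AuxLemmas


theorem chain_unique {S : Type u} [Lattice S] {L : S → Type v}
    [∀ x, Lattice (L x)] [∀ x, BoundedOrder (L x)]
    {Ω : ∀ x y : S, x ⋖ y → L x → L y → Prop}
    (hmin : MinimalAxioms L Ω) :
    ∀ (n : ℕ) (a b : S) (f g : L a → L b → Prop),
      ChainComp L Ω a b f → ChainComp L Ω a b g → (Set.Icc a b).ncard ≤ n → f = g := by
  obtain ⟨hfin, -, -, -, -, -, -, hPS6, -, -⟩ := hmin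
  intro n
  induction n using Nat.strong_induction_on with
  | _ n IH =>
    intro a b f g hf hg hcard
    cases hf with
    | refl => exact (hg.eq_of_self).symm
    | @cons _ p _ hap F hF =>
      cases hg with
      | refl => exact absurd hF.le hap.lt.not_ge
      | @cons _ q _ haq G hG =>
        by_cases hpq : p = q
        · subst hpq
          have hss : Set.Icc p b ⊂ Set.Icc a b := by
            constructor
            · exact Set.Icc_subset_Icc_left hap.le
            · intro hsub
              exact absurd (hsub ⟨le_rfl, hap.le.trans hF.le⟩).1 hap.lt.not_ge
          have hlt : (Set.Icc p b).ncard < n :=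
            lt_of_lt_of_le (Set.ncard_lt_ncard hss (hfin a b)) hcard
          have : F = G := IH _ hlt p b F G hF hG le_rfl
          rw [this]
        · -- distinct first steps
          have hple : ¬ p ≤ q := by
            intro hle
            rcases hle.lt_or_eq with h | h
            · exact haq.2 hap.lt h
            · exact hpq h
          have hinf : p ⊓ q = a := by
            have h1 : p ⊓ q ≤ p := inf_le_left
            have h2 : a ≤ p ⊓ q := le_inf hap.le haq.le
            rcases h2.lt_or_eq with h | h
            · exfalso
              have h3 : p ⊓ q < p := lt_of_le_of_ne h1 (fun he => hple (he ▸ inf_le_right))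
              exact hap.2 h h3
            · exact h.symm
          subst hinf
          obtain ⟨F', G', hF', hG', heq⟩ := hPS6 p q hap haq
          have hsb : p ⊔ q ≤ b := sup_le hF.le hG.le
          obtain ⟨H, hH⟩ := chain_exists (L := L) (Ω := Ω) hfin ((Set.Icc (p ⊔ q) b).ncard)
            (p ⊔ q) b hsb le_rfl
          have hssp : Set.Icc p b ⊂ Set.Icc (p ⊓ q) b := by
            constructor
            · exact Set.Icc_subset_Icc_left hap.le
            · intro hsub
              exact absurd (hsub ⟨le_rfl, hap.le.trans hF.le⟩).1 hap.lt.not_ge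
          have hssq : Set.Icc q b ⊂ Set.Icc (p ⊓ q) b := by
            constructor
            · exact Set.Icc_subset_Icc_left haq.le
            · intro hsub
              exact absurd (hsub ⟨le_rfl, haq.le.trans hG.le⟩).1 haq.lt.not_ge
          have hFeq : F = Relation.Comp F' H :=
            IH _ (lt_of_lt_of_le (Set.ncard_lt_ncard hssp (hfin _ b)) hcard) p b _ _
              hF (hF'.comp hH) le_rfl
          have hGeq : G = Relation.Comp G' H :=
            IH _ (lt_of_lt_of_le (Set.ncard_lt_ncard hssq (hfin _ b)) hcard) q b _ _
              hG (hG'.comp hH) le_rfl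
          rw [hFeq, hGeq, ← Relation.comp_assoc, ← Relation.comp_assoc, heq]

section Phi

variable {S : Type u} [Lattice S] {L : S → Type v}
  [∀ x, Lattice (L x)] [∀ x, BoundedOrder (L x)]
  {Ω : ∀ x y : S, x ⋖ y → L x → L y → Prop}

theorem chaincomp_bij (hmin : MinimalAxioms L Ω) {a b : S} {f : L a → L b → Prop}
    (hf : ChainComp L Ω a b f) : IsPartialBij f := by
  induction hf with
  | refl a =>
    exact ⟨fun a b b' h h' => h.symm.trans h', fun a a' b h h' => h.trans h'.symm⟩
  | cons h hf ih => exact isPartialBij_comp ((hmin.2.2.2.2.2.2.1 _ _ h).1) ih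

variable (hmin : MinimalAxioms L Ω) (Φ : ∀ x y : S, x ≤ y → (L x → L y → Prop))
  (hΦ : ∀ x y : S, ∀ h : x ≤ y, ChainComp L Ω x y (Φ x y h))

include hmin hΦ

theorem phi_unique {a b : S} {f : L a → L b → Prop} (hf : ChainComp L Ω a b f)
    (h : a ≤ b) : Φ a b h = f :=
  chain_unique hmin ((Set.Icc a b).ncard) a b _ f (hΦ a b h) hf le_rfl

theorem phi_bij {a b : S} (h : a ≤ b) : IsPartialBij (Φ a b h) :=
  chaincomp_bij hmin (hΦ a b h)

omit hmin hΦ in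
theorem rim_phi_congr {a a' t : S} (h : a = a') (h1 : a ≤ t) (h2 : a' ≤ t) :
    rim (Φ a t h1) = rim (Φ a' t h2) := by subst h; rfl

theorem phi_comp {a m t : S} (h1 : a ≤ m) (h2 : m ≤ t) (h3 : a ≤ t) :
    Φ a t h3 = Relation.Comp (Φ a m h1) (Φ m t h2) :=
  phi_unique hmin Φ hΦ ((hΦ a m h1).comp (hΦ m t h2)) h3

theorem rim_phi_mono {a m t : S} (h1 : a ≤ m) (h2 : m ≤ t) (h3 : a ≤ t) :
    rim (Φ a t h3) ⊆ rim (Φ m t h2) := by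
  rw [phi_comp hmin Φ hΦ h1 h2 h3]
  exact rim_comp_subset _ _

theorem phi_step {x m t : S} (h1 : x ≤ m) (h2 : m ≤ t) (h3 : x ≤ t) {b : L t}
    (hb : b ∈ rim (Φ x t h3)) :
    ∃ c, Φ m t h2 c b ∧ c ∈ rim (Φ x m h1) := by
  rw [phi_comp hmin Φ hΦ h1 h2 h3] at hb
  rcases hb with ⟨a, c, hac, hcb⟩
  exact ⟨c, hcb, a, hac⟩

theorem phi_push {a m t : S} (h1 : a ≤ m) (h2 : m ≤ t) (h3 : a ≤ t) {c : L m} {b : L t}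
    (hc : c ∈ rim (Φ a m h1)) (hcb : Φ m t h2 c b) : b ∈ rim (Φ a t h3) := by
  rw [phi_comp hmin Φ hΦ h1 h2 h3]
  rcases hc with ⟨u, hu⟩
  exact ⟨u, c, hu, hcb⟩

theorem phi_cover_rim {a t : S} (h : a ⋖ t) :
    rim (Φ a t h.le) = rim (Ω a t h) := by
  rw [phi_unique hmin Φ hΦ (ChainComp.cons h (ChainComp.refl t)) h.le, comp_eq_right]

end Phi


theorem keyC {S : Type u} [Lattice S] {L : S → Type v}
    [∀ x, Lattice (L x)] [∀ x, BoundedOrder (L x)]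
    {Ω : ∀ x y : S, x ⋖ y → L x → L y → Prop}
    (hmin : MinimalAxioms L Ω) (Φ : ∀ x y : S, x ≤ y → (L x → L y → Prop))
    (hΦ : ∀ x y : S, ∀ h : x ≤ y, ChainComp L Ω x y (Φ x y h)) :
    ∀ (n : ℕ) (x y t : S) (hx : x ≤ t) (hy : y ≤ t),
      (Set.Icc (x ⊓ y) t).ncard ≤ n →
      rim (Φ x t hx) ∩ rim (Φ y t hy) ⊆ rim (Φ (x ⊓ y) t (inf_le_left.trans hx)) := by
  have hfin : ∀ a b : S, (Set.Icc a b).Finite := hmin.1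
  have hPS8 := hmin.2.2.2.2.2.2.2.2.2
  intro n
  induction n using Nat.strong_induction_on with
  | _ n IH =>
    intro x y t hx hy hcard b hb
    obtain ⟨hbx, hby⟩ := hb
    rcases eq_or_lt_of_le hx with rfl | hxt
    · rw [rim_phi_congr Φ (inf_eq_right.mpr hy) (inf_le_left.trans hx) hy]
      exact hby
    rcases eq_or_lt_of_le hy with rfl | hyt
    · rw [rim_phi_congr Φ (inf_eq_left.mpr hxt.le) (inf_le_left.trans hx) hxt.le]
      exact hbx
    obtain ⟨x', hxx', hx't⟩ := exists_cover_below hfin hxt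
    obtain ⟨y', hyy', hy't⟩ := exists_cover_below hfin hyt
    by_cases hxy' : x' = y'
    · -- both below the same lower cover of t
      subst hxy'
      obtain ⟨c, hcΦ, hcx⟩ := phi_step hmin Φ hΦ hxx' hx't.le hx hbx
      obtain ⟨c', hc'Φ, hcy⟩ := phi_step hmin Φ hΦ hyy' hx't.le hy hby
      obtain rfl : c = c' := (phi_bij hmin Φ hΦ hx't.le).2 c c' b hcΦ hc'Φ
      have hss : Set.Icc (x ⊓ y) x' ⊂ Set.Icc (x ⊓ y) t := by
        constructor
        · exact Set.Icc_subset_Icc_right hx't.le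
        · intro hsub
          exact absurd (hsub ⟨inf_le_left.trans hx, le_rfl⟩).2 hx't.lt.not_ge
      have hlt : (Set.Icc (x ⊓ y) x').ncard < n :=
        lt_of_lt_of_le (Set.ncard_lt_ncard hss (hfin _ t)) hcard
      have hc : c ∈ rim (Φ (x ⊓ y) x' (inf_le_left.trans hxx')) :=
        IH _ hlt x y x' hxx' hyy' le_rfl ⟨hcx, hcy⟩
      exact phi_push hmin Φ hΦ (inf_le_left.trans hxx') hx't.le (inf_le_left.trans hx) hc hcΦ
    · -- distinct lower covers of t
      have hsup : x' ⊔ y' = t := by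
        rcases (sup_le hx't.le hy't.le : x' ⊔ y' ≤ t).lt_or_eq with h | h
        · exfalso
          rcases (le_sup_left : x' ≤ x' ⊔ y').lt_or_eq with h2 | h2
          · exact hx't.2 h2 h
          · have hy'x : y' ≤ x' := h2 ▸ le_sup_right
            rcases hy'x.lt_or_eq with h3 | h3
            · exact hy't.2 h3 hx't.lt
            · exact hxy' h3.symm
        · exact h
      subst hsup
      obtain ⟨H, hH, hrim⟩ := hPS8 x' y' hx't hy't
      have hHphi : Φ (x' ⊓ y') (x' ⊔ y') (inf_le_left.trans le_sup_left) = H :=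
        phi_unique hmin Φ hΦ hH _
      have hbx' : b ∈ rim (Ω x' (x' ⊔ y') hx't) := by
        rw [← phi_cover_rim hmin Φ hΦ hx't]
        exact rim_phi_mono hmin Φ hΦ hxx' hx't.le hx hbx
      have hby' : b ∈ rim (Ω y' (x' ⊔ y') hy't) := by
        rw [← phi_cover_rim hmin Φ hΦ hy't]
        exact rim_phi_mono hmin Φ hΦ hyy' hy't.le hy hby
      have hbz : b ∈ rim (Φ (x' ⊓ y') (x' ⊔ y') (inf_le_left.trans le_sup_left)) := by
        rw [hHphi]; exact hrim ⟨hbx', hby'⟩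
      have hxyle : x ⊓ y ≤ x' ⊓ y' := le_inf (inf_le_left.trans hxx') (inf_le_right.trans hyy')
      -- Step A: combine x and x' ⊓ y' over x'
      obtain ⟨c, hcΦ, hcx⟩ := phi_step hmin Φ hΦ hxx' hx't.le hx hbx
      obtain ⟨c', hc'Φ, hcz⟩ := phi_step hmin Φ hΦ (inf_le_left : x' ⊓ y' ≤ x')
        hx't.le (inf_le_left.trans le_sup_left) hbz
      obtain rfl : c = c' := (phi_bij hmin Φ hΦ hx't.le).2 c c' b hcΦ hc'Φ
      have hssA : Set.Icc (x ⊓ (x' ⊓ y')) x' ⊂ Set.Icc (x ⊓ y) (x' ⊔ y') := by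
        constructor
        · exact Set.Icc_subset_Icc (le_inf inf_le_left hxyle) le_sup_left
        · intro hsub
          exact absurd (hsub ⟨inf_le_left.trans hx, le_rfl⟩).2 hx't.lt.not_ge
      have hltA : (Set.Icc (x ⊓ (x' ⊓ y')) x').ncard < n :=
        lt_of_lt_of_le (Set.ncard_lt_ncard hssA (hfin _ _)) hcard
      have hcA : c ∈ rim (Φ (x ⊓ (x' ⊓ y')) x' (inf_le_left.trans hxx')) :=
        IH _ hltA x (x' ⊓ y') x' hxx' inf_le_left le_rfl ⟨hcx, hcz⟩
      have hbA : b ∈ rim (Φ (x ⊓ (x' ⊓ y')) (x' ⊔ y') (inf_le_left.trans hx)) :=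
        phi_push hmin Φ hΦ (inf_le_left.trans hxx') hx't.le (inf_le_left.trans hx) hcA hcΦ
      -- Step B: combine (x ⊓ (x' ⊓ y')) and y over y'
      have hAy' : x ⊓ (x' ⊓ y') ≤ y' := inf_le_right.trans inf_le_right
      obtain ⟨d, hdΦ, hdA⟩ := phi_step hmin Φ hΦ hAy' hy't.le (inf_le_left.trans hx) hbA
      obtain ⟨d', hd'Φ, hdy⟩ := phi_step hmin Φ hΦ hyy' hy't.le hy hby
      obtain rfl : d = d' := (phi_bij hmin Φ hΦ hy't.le).2 d d' b hdΦ hd'Φ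
      have hssB : Set.Icc ((x ⊓ (x' ⊓ y')) ⊓ y) y' ⊂ Set.Icc (x ⊓ y) (x' ⊔ y') := by
        constructor
        · exact Set.Icc_subset_Icc (le_inf (le_inf inf_le_left hxyle) inf_le_right) le_sup_right
        · intro hsub
          exact absurd (hsub ⟨inf_le_left.trans hx, le_rfl⟩).2 hy't.lt.not_ge
      have hltB : (Set.Icc ((x ⊓ (x' ⊓ y')) ⊓ y) y').ncard < n :=
        lt_of_lt_of_le (Set.ncard_lt_ncard hssB (hfin _ _)) hcard
      have hdB : d ∈ rim (Φ ((x ⊓ (x' ⊓ y')) ⊓ y) y' (inf_le_left.trans hAy')) :=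
        IH _ hltB (x ⊓ (x' ⊓ y')) y y' hAy' hyy' le_rfl ⟨hdA, hdy⟩
      have hbB : b ∈ rim (Φ ((x ⊓ (x' ⊓ y')) ⊓ y) (x' ⊔ y')
          ((inf_le_left.trans hAy').trans hy't.le)) :=
        phi_push hmin Φ hΦ (inf_le_left.trans hAy') hy't.le _ hdB hdΦ
      have heqm : (x ⊓ (x' ⊓ y')) ⊓ y = x ⊓ y :=
        le_antisymm (le_inf (inf_le_left.trans inf_le_left) inf_le_right)
          (le_inf (le_inf inf_le_left hxyle) inf_le_right)
      rwa [rim_phi_congr Φ heqm ((inf_le_left.trans hAy').trans hy't.le)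
        (inf_le_left.trans hx)] at hbB


theorem im_inter_im_eq_im {S : Type u} [Lattice S] (L : S → Type v)
    [∀ x, Lattice (L x)] [∀ x, BoundedOrder (L x)]
    (Ω : ∀ x y : S, x ⋖ y → L x → L y → Prop)
    (hmin : MinimalAxioms L Ω)
    (Φ : ∀ x y : S, x ≤ y → (L x → L y → Prop))
    (hΦ : ∀ x y : S, ∀ h : x ≤ y, ChainComp L Ω x y (Φ x y h)) :
    ∀ x y : S,
      rim (Φ x (x ⊔ y) le_sup_left) ∩ rim (Φ y (x ⊔ y) le_sup_right) =
        rim (Φ (x ⊓ y) (x ⊔ y) (inf_le_left.trans le_sup_left)) := by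
  intro x y
  apply Set.Subset.antisymm
  · exact keyC hmin Φ hΦ ((Set.Icc (x ⊓ y) (x ⊔ y)).ncard) x y (x ⊔ y)
      le_sup_left le_sup_right le_rfl
  · intro b hb
    refine ⟨?_, ?_⟩
    · exact rim_phi_mono hmin Φ hΦ inf_le_left le_sup_left (inf_le_left.trans le_sup_left) hb
    · exact rim_phi_mono hmin Φ hΦ inf_le_right le_sup_right (inf_le_left.trans le_sup_left) hb
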